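/- arXiv:2112.03075 — 4 statements merged into one kernel-verified Lean document; each statement's English description precedes it below -/
import Mathlib

section
/- Let Y ~ F have finite first moment and τ ∈ (0,1). Then the lower expected shortfall satisfies ES⁻_τ(F) = −(1/τ)·min over v ∈ ℝ of E[S⁻_τ(Y;v)], and the upper expected shortfall satisfies ES⁺_τ(F) = (1/(1−τ))·min over v ∈ ℝ of E[S⁺_τ(Y;v)]. -/
open MeasureTheory

noncomputable def Sminus (τ y a : ℝ) : ℝ :=
  ((if y ≤ a then (1:ℝ) else 0) - τ) * a - (if y ≤ a then (1:ℝ) else 0) * y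

noncomputable def Splus (τ y a : ℝ) : ℝ :=
  (1 - τ - (if a < y then (1:ℝ) else 0)) * a + (if a < y then (1:ℝ) else 0) * y

/-- Left-continuous generalized inverse of the CDF of μ. -/
noncomputable def genInv (μ : Measure ℝ) (p : ℝ) : ℝ :=
  sInf {x : ℝ | p ≤ (μ (Set.Iic x)).toReal}

/-- Lower expected shortfall at level τ. -/
noncomputable def ESminus (μ : Measure ℝ) (τ : ℝ) : ℝ :=
  (1 / τ) * ∫ p in Set.Ioc (0:ℝ) τ, genInv μ p

/-- Upper expected shortfall at level τ. -/
noncomputable def ESplus (μ : Measure ℝ) (τ : ℝ) : ℝ :=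
  (1 / (1 - τ)) * ∫ p in Set.Ioc τ (1:ℝ), genInv μ p

/-! Write `q(p) = genInv μ p`. Under Lebesgue measure on `(0,1)` the quantile function `q` has law
`μ`, and it is monotone. Since `S⁻_τ(y;v) = (v - y)⁺ - τ v`, this gives
`E[S⁻_τ(Y;v)] = ∫₀¹ (v - q(p))⁺ dp - τ v ≥ ∫₀^τ (v - q(p)) dp - τ v = -∫₀^τ q(p) dp`,
with equality at `v = q(τ)`, because monotonicity makes `(q(τ) - q(p))⁺` vanish for `p > τ`
and equal `q(τ) - q(p)` for `p ≤ τ`. The upper case follows from `S⁺_τ(y;v) = S⁻_τ(y;v) + y`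
and `E[Y] = ∫₀¹ q(p) dp`. -/

open Set Filter ProbabilityTheory
open scoped Topology

section Quantile

variable {μ : Measure ℝ} {p : ℝ}

lemma bddBelow_setOf_le_cdf (hp : 0 < p) : BddBelow {x | p ≤ cdf μ x} := by
  obtain ⟨x₀, hx₀⟩ := eventually_atBot.mp ((tendsto_cdf_atBot μ).eventually_lt_const hp)
  exact ⟨x₀, fun x hx => le_of_not_gt fun hlt => (hx₀ x hlt.le).not_ge hx⟩

lemma nonempty_setOf_le_cdf (hp : p < 1) : {x | p ≤ cdf μ x}.Nonempty :=
  ((tendsto_cdf_atTop μ).eventually_const_le hp).exists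

variable [IsProbabilityMeasure μ]

lemma genInv_eq_sInf_cdf (p : ℝ) : genInv μ p = sInf {x | p ≤ cdf μ x} := by
  simp only [genInv, cdf_eq_real, measureReal_def]

lemma le_cdf_genInv (hp : p ∈ Ioo 0 1) : p ≤ cdf μ (genInv μ p) := by
  rw [genInv_eq_sInf_cdf]
  set a := sInf {x | p ≤ cdf μ x}
  have h : ∀ᶠ y in 𝓝[>] a, p ≤ cdf μ y := eventually_nhdsWithin_of_forall fun y hy => by
    obtain ⟨z, hz, hzy⟩ :=
      (csInf_lt_iff (bddBelow_setOf_le_cdf hp.1) (nonempty_setOf_le_cdf hp.2)).mp hy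
    exact hz.trans (monotone_cdf μ hzy.le)
  exact ge_of_tendsto (((cdf μ).right_continuous a).mono Ioi_subset_Ici_self).tendsto h

lemma genInv_le_iff (hp : p ∈ Ioo 0 1) {x : ℝ} : genInv μ p ≤ x ↔ p ≤ cdf μ x :=
  ⟨fun h => (le_cdf_genInv hp).trans (monotone_cdf μ h),
    fun h => (genInv_eq_sInf_cdf p).trans_le (csInf_le (bddBelow_setOf_le_cdf hp.1) h)⟩

lemma monotoneOn_genInv : MonotoneOn (genInv μ) (Ioo 0 1) := fun _ hp _ hp' hpp' =>
  (genInv_le_iff hp).mpr (hpp'.trans (le_cdf_genInv hp'))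

lemma aemeasurable_genInv : AEMeasurable (genInv μ) (volume.restrict (Ioo 0 1)) :=
  aemeasurable_restrict_of_monotoneOn measurableSet_Ioo monotoneOn_genInv

lemma map_genInv_volume_Ioo : (volume.restrict (Ioo 0 1)).map (genInv μ) = μ := by
  refine (Measure.ext_of_Iic _ _ fun x => ?_).symm
  have hpre : genInv μ ⁻¹' Iic x ∩ Ioo 0 1 = Iic (cdf μ x) ∩ Ioo 0 1 := by
    ext p
    exact and_congr_left fun hp => genInv_le_iff hp
  rw [Measure.map_apply_of_aemeasurable aemeasurable_genInv measurableSet_Iic,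
    Measure.restrict_apply' measurableSet_Ioo, hpre, ← Measure.restrict_apply' measurableSet_Ioo,
    Measure.restrict_congr_set Ioo_ae_eq_Ioc, Measure.restrict_apply measurableSet_Iic,
    Iic_inter_Ioc_of_le (cdf_le_one μ x), Real.volume_Ioc, sub_zero, ofReal_cdf]

lemma integrableOn_comp_genInv {g : ℝ → ℝ} (hg : Integrable g μ) :
    IntegrableOn (fun p => g (genInv μ p)) (Ioo 0 1) := by
  rw [← map_genInv_volume_Ioo (μ := μ)] at hg
  exact (integrable_map_measure hg.aestronglyMeasurable aemeasurable_genInv).mp hg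

lemma setIntegral_comp_genInv {g : ℝ → ℝ} (hg : AEStronglyMeasurable g μ) :
    ∫ p in Ioo 0 1, g (genInv μ p) = ∫ y, g y ∂μ := by
  rw [← map_genInv_volume_Ioo (μ := μ)] at hg
  conv_rhs => rw [← map_genInv_volume_Ioo (μ := μ)]
  exact (integral_map aemeasurable_genInv hg).symm

lemma max_genInv_sub_genInv {τ : ℝ} (hτ : τ ∈ Ioo 0 1) {p : ℝ} (hp : p ∈ Ioo 0 1) :
    max (genInv μ τ - genInv μ p) 0 = (Iic τ).indicator (fun p => genInv μ τ - genInv μ p) p := by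
  by_cases hpτ : p ≤ τ
  · rw [indicator_of_mem (mem_Iic.mpr hpτ),
      max_eq_left (sub_nonneg.mpr (monotoneOn_genInv hp hτ hpτ))]
  · rw [indicator_of_notMem (notMem_Iic.mpr (not_le.mp hpτ)),
      max_eq_right (sub_nonpos.mpr (monotoneOn_genInv hτ hp (not_le.mp hpτ).le))]

end Quantile

lemma Sminus_eq_max_sub (τ y v : ℝ) : Sminus τ y v = max (v - y) 0 - τ * v := by
  unfold Sminus
  split_ifs with h
  · rw [max_eq_left (sub_nonneg.mpr h)]; ring
  · rw [max_eq_right (by linarith)]; ring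

lemma Splus_eq_Sminus_add (τ y v : ℝ) : Splus τ y v = Sminus τ y v + y := by
  unfold Splus Sminus
  by_cases h : y ≤ v
  · rw [if_pos h, if_neg h.not_gt]; ring
  · rw [if_neg h, if_pos (not_le.mp h)]; ring

section Scores

variable {μ : Measure ℝ} [IsProbabilityMeasure μ] (hY : Integrable (fun y : ℝ => y) μ) {τ : ℝ}
include hY

lemma integrable_posPart_sub (v : ℝ) : Integrable (fun y => max (v - y) 0) μ :=
  ((integrable_const v).sub hY).pos_part

lemma integral_Sminus (v : ℝ) :
    ∫ y, Sminus τ y v ∂μ = (∫ p in Ioo 0 1, max (v - genInv μ p) 0) - τ * v := by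
  simp_rw [Sminus_eq_max_sub]
  rw [integral_sub (integrable_posPart_sub hY v) (integrable_const _), integral_const,
    probReal_univ, one_smul,
    ← setIntegral_comp_genInv (integrable_posPart_sub hY v).aestronglyMeasurable]

lemma integral_Splus (v : ℝ) :
    ∫ y, Splus τ y v ∂μ = ∫ y, Sminus τ y v ∂μ + ∫ y, y ∂μ := by
  have hSminus : Integrable (fun y => Sminus τ y v) μ := by
    simp_rw [Sminus_eq_max_sub]
    exact (integrable_posPart_sub hY v).sub (integrable_const _)
  simp_rw [Splus_eq_Sminus_add]
  exact integral_add hSminus hY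

lemma integrableOn_genInv : IntegrableOn (genInv μ) (Ioo 0 1) :=
  integrableOn_comp_genInv hY

lemma neg_setIntegral_genInv_le_integral_Sminus (hτ : τ ∈ Ioo 0 1) (v : ℝ) :
    -∫ p in Ioc 0 τ, genInv μ p ≤ ∫ y, Sminus τ y v ∂μ := by
  have hsub : Ioc 0 τ ⊆ Ioo 0 1 := Ioc_subset_Ioo_right hτ.2
  have hint : IntegrableOn (genInv μ) (Ioc 0 τ) := (integrableOn_genInv hY).mono_set hsub
  have hpos : IntegrableOn (fun p => max (v - genInv μ p) 0) (Ioo 0 1) :=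
    ((integrable_const v).sub (integrableOn_genInv hY)).pos_part
  rw [integral_Sminus hY]
  calc -∫ p in Ioc 0 τ, genInv μ p = (∫ p in Ioc 0 τ, v - genInv μ p) - τ * v := by
        rw [integral_sub (integrable_const v) hint, setIntegral_const,
          Real.volume_real_Ioc_of_le hτ.1.le, smul_eq_mul]
        ring
    _ ≤ (∫ p in Ioc 0 τ, max (v - genInv μ p) 0) - τ * v :=
        sub_le_sub_right (setIntegral_mono_on ((integrable_const v).sub hint)
          (hpos.mono_set hsub) measurableSet_Ioc fun p _ => le_max_left _ _) _
    _ ≤ (∫ p in Ioo 0 1, max (v - genInv μ p) 0) - τ * v :=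
        sub_le_sub_right (setIntegral_mono_set hpos (ae_of_all _ fun p => le_max_right _ _)
          hsub.eventuallyLE) _

lemma integral_Sminus_genInv (hτ : τ ∈ Ioo 0 1) :
    ∫ y, Sminus τ y (genInv μ τ) ∂μ = -∫ p in Ioc 0 τ, genInv μ p := by
  have hint : IntegrableOn (genInv μ) (Ioc 0 τ) :=
    (integrableOn_genInv hY).mono_set (Ioc_subset_Ioo_right hτ.2)
  have hset : Iic τ ∩ Ioo 0 1 = Ioc 0 τ := by
    ext p
    exact ⟨fun ⟨h, h0, _⟩ => ⟨h0, h⟩, fun ⟨h0, h⟩ => ⟨h, h0, h.trans_lt hτ.2⟩⟩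
  rw [integral_Sminus hY, setIntegral_congr_fun measurableSet_Ioo
    fun p hp => max_genInv_sub_genInv hτ hp, integral_indicator measurableSet_Iic,
    Measure.restrict_restrict measurableSet_Iic, hset,
    integral_sub (integrable_const _) hint, setIntegral_const,
    Real.volume_real_Ioc_of_le hτ.1.le, smul_eq_mul]
  ring

lemma integral_id_eq_setIntegral_genInv_add (hτ : τ ∈ Ioo 0 1) :
    ∫ y, y ∂μ = (∫ p in Ioc 0 τ, genInv μ p) + ∫ p in Ioc τ 1, genInv μ p := by
  have hint := integrableOn_genInv hY
  rw [← setIntegral_comp_genInv hY.aestronglyMeasurable, integral_Ioc_eq_integral_Ioo (x := τ),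
    ← Ioc_union_Ioo_eq_Ioo hτ.1.le hτ.2,
    setIntegral_union (Ioc_disjoint_Ioi_same.mono_right Ioo_subset_Ioi_self) measurableSet_Ioo
      (hint.mono_set (Ioc_subset_Ioo_right hτ.2)) (hint.mono_set (Ioo_subset_Ioo_left hτ.1.le))]

end Scores

theorem ES_as_min_of_scores (μ : Measure ℝ) [IsProbabilityMeasure μ]
    (hY : Integrable (fun y : ℝ => y) μ) (τ : ℝ) (hτ : τ ∈ Set.Ioo (0:ℝ) 1) :
    (∃ v₀ : ℝ, (∀ v : ℝ, ∫ y, Sminus τ y v₀ ∂μ ≤ ∫ y, Sminus τ y v ∂μ) ∧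
      ESminus μ τ = -(1 / τ) * ∫ y, Sminus τ y v₀ ∂μ) ∧
    (∃ v₁ : ℝ, (∀ v : ℝ, ∫ y, Splus τ y v₁ ∂μ ≤ ∫ y, Splus τ y v ∂μ) ∧
      ESplus μ τ = (1 / (1 - τ)) * ∫ y, Splus τ y v₁ ∂μ) := by
  have hmin : ∀ v, ∫ y, Sminus τ y (genInv μ τ) ∂μ ≤ ∫ y, Sminus τ y v ∂μ := fun v =>
    (integral_Sminus_genInv hY hτ).trans_le (neg_setIntegral_genInv_le_integral_Sminus hY hτ v)
  refine ⟨⟨genInv μ τ, hmin, ?_⟩, ⟨genInv μ τ, fun v => ?_, ?_⟩⟩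
  · rw [ESminus, integral_Sminus_genInv hY hτ]
    ring
  · rw [integral_Splus hY, integral_Splus hY]
    exact add_le_add_left (hmin v) _
  · rw [ESplus, integral_Splus hY, integral_Sminus_genInv hY hτ,
      integral_id_eq_setIntegral_genInv_add hY hτ]
    ring
end

section
/- Let φ: I → ℝ be convex on an interval I with subgradient φ′, and define the Bregman divergence L_φ(y;a) = φ(y) − φ(a) − φ′(a)(y−a). Then for any random variable Y supported in I with E[|Y|] < ∞ and E[|φ(Y)|] < ∞, and any a, μ ∈ I with μ = E[Y], one has E[L_φ(Y;μ)] ≤ E[L_φ(Y;a)]. If φ is strictly convex, equality implies a = μ. -/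
/-!
Linearity of the integral gives `E[L(Y;a)] - E[L(Y;E Y)] = L(E Y; a)`, a single Bregman
divergence, which is nonnegative by the subgradient inequality and, for strictly convex `φ`,
positive unless `a = E Y`.
-/

open MeasureTheory

/-- Bregman divergence of φ with subgradient selection φ'. -/
noncomputable def bregman (φ φ' : ℝ → ℝ) (y a : ℝ) : ℝ :=
  φ y - φ a - φ' a * (y - a)

section Bregman

variable {I : Set ℝ} {φ φ' : ℝ → ℝ}

theorem bregman_nonneg (hsub : ∀ a ∈ I, ∀ y ∈ I, φ a + φ' a * (y - a) ≤ φ y)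
    {y a : ℝ} (hy : y ∈ I) (ha : a ∈ I) : 0 ≤ bregman φ φ' y a := by
  have := hsub a ha y hy
  unfold bregman
  linarith

/-- Compare the supporting line at `a` with the strict chord inequality at the midpoint of
`a` and `y`. -/
theorem StrictConvexOn.bregman_pos (hφ : StrictConvexOn ℝ I φ)
    (hsub : ∀ a ∈ I, ∀ y ∈ I, φ a + φ' a * (y - a) ≤ φ y)
    {y a : ℝ} (hy : y ∈ I) (ha : a ∈ I) (hya : y ≠ a) : 0 < bregman φ φ' y a := by
  have hmid : (1 / 2 : ℝ) • a + (1 / 2 : ℝ) • y ∈ I :=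
    hφ.1 ha hy (by norm_num) (by norm_num) (by norm_num)
  have hchord := hφ.2 ha hy hya.symm (by norm_num : (0 : ℝ) < 1 / 2)
    (by norm_num : (0 : ℝ) < 1 / 2) (by norm_num)
  have hline := hsub a ha _ hmid
  simp only [smul_eq_mul] at hchord hline
  unfold bregman
  nlinarith

theorem StrictConvexOn.eq_of_bregman_eq_zero (hφ : StrictConvexOn ℝ I φ)
    (hsub : ∀ a ∈ I, ∀ y ∈ I, φ a + φ' a * (y - a) ≤ φ y)
    {y a : ℝ} (hy : y ∈ I) (ha : a ∈ I) (h : bregman φ φ' y a = 0) : y = a := by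
  by_contra hya
  exact (hφ.bregman_pos hsub hy ha hya).ne' h

end Bregman

section Expectation

variable {Ω : Type*} [MeasurableSpace Ω] {P : Measure Ω} [IsProbabilityMeasure P]
  {φ φ' : ℝ → ℝ} {Y : Ω → ℝ}

theorem integral_bregman (hY : Integrable Y P) (hφY : Integrable (fun ω => φ (Y ω)) P)
    (c : ℝ) :
    ∫ ω, bregman φ φ' (Y ω) c ∂P
      = (∫ ω, φ (Y ω) ∂P) - φ c - φ' c * ((∫ ω, Y ω ∂P) - c) := by
  have hshift : Integrable (fun ω => φ (Y ω) - φ c) P := hφY.sub (integrable_const _)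
  have hlinear : Integrable (fun ω => φ' c * (Y ω - c)) P :=
    (hY.sub (integrable_const _)).const_mul _
  unfold bregman
  rw [integral_sub hshift hlinear, integral_sub hφY (integrable_const _), integral_const_mul,
    integral_sub hY (integrable_const _)]
  simp

theorem integral_bregman_sub_integral_bregman_mean (hY : Integrable Y P)
    (hφY : Integrable (fun ω => φ (Y ω)) P) (a : ℝ) :
    (∫ ω, bregman φ φ' (Y ω) a ∂P) - ∫ ω, bregman φ φ' (Y ω) (∫ ω, Y ω ∂P) ∂P
      = bregman φ φ' (∫ ω, Y ω ∂P) a := by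
  rw [integral_bregman hY hφY, integral_bregman hY hφY, bregman]
  ring

end Expectation

theorem bregman_consistent_for_mean_general
    {Ω : Type*} [MeasurableSpace Ω] (P : Measure Ω) [IsProbabilityMeasure P]
    (I : Set ℝ) (φ φ' : ℝ → ℝ)
    (hsub : ∀ a ∈ I, ∀ y ∈ I, φ a + φ' a * (y - a) ≤ φ y)
    (Y : Ω → ℝ)
    (hYint : Integrable Y P) (hφYint : Integrable (fun ω => φ (Y ω)) P)
    (μ : ℝ) (hμ : μ = ∫ ω, Y ω ∂P) (hμI : μ ∈ I) (a : ℝ) (ha : a ∈ I) :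
    (∫ ω, bregman φ φ' (Y ω) μ ∂P ≤ ∫ ω, bregman φ φ' (Y ω) a ∂P) ∧
    (StrictConvexOn ℝ I φ →
      ∫ ω, bregman φ φ' (Y ω) μ ∂P = ∫ ω, bregman φ φ' (Y ω) a ∂P → a = μ) := by
  have hexcess := integral_bregman_sub_integral_bregman_mean (φ' := φ') hYint hφYint a
  rw [← hμ] at hexcess
  refine ⟨by linarith [bregman_nonneg hsub hμI ha], fun hφ heq => ?_⟩
  exact (hφ.eq_of_bregman_eq_zero hsub hμI ha (by linarith)).symm

theorem bregman_consistent_for_mean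
    {Ω : Type*} [MeasurableSpace Ω] (P : Measure Ω) [IsProbabilityMeasure P]
    (I : Set ℝ) (hI : Convex ℝ I) (φ φ' : ℝ → ℝ)
    (hconv : ConvexOn ℝ I φ)
    (hsub : ∀ a ∈ I, ∀ y ∈ I, φ a + φ' a * (y - a) ≤ φ y)
    (Y : Ω → ℝ) (hYmeas : Measurable Y) (hYI : ∀ ω, Y ω ∈ I)
    (hYint : Integrable Y P) (hφYint : Integrable (fun ω => φ (Y ω)) P)
    (μ : ℝ) (hμ : μ = ∫ ω, Y ω ∂P) (hμI : μ ∈ I) (a : ℝ) (ha : a ∈ I) :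
    (∫ ω, bregman φ φ' (Y ω) μ ∂P ≤ ∫ ω, bregman φ φ' (Y ω) a ∂P) ∧
    (StrictConvexOn ℝ I φ →
      ∫ ω, bregman φ φ' (Y ω) μ ∂P = ∫ ω, bregman φ φ' (Y ω) a ∂P → a = μ) :=
  bregman_consistent_for_mean_general P I φ φ' hsub Y hYint hφYint μ hμ hμI a ha
end

section
/- Let g: I → ℝ be strictly increasing on an interval I, τ ∈ (0,1), and let Y ~ F be supported in I with E[|g(Y)|] < ∞. Define the generalized piecewise linear loss L(y;a) = (g(y) − g(a))(τ − 𝟙{y ≤ a}). Then for every q ∈ q_τ(F) and every a ∈ I, E[L(Y;q)] ≤ E[L(Y;a)], with equality only if a ∈ q_τ(F). -/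
open MeasureTheory

/-- Generalized piecewise linear loss. -/
noncomputable def gplLoss (g : ℝ → ℝ) (τ y a : ℝ) : ℝ :=
  (g y - g a) * (τ - if y ≤ a then 1 else 0)

def quantileSet (μ : Measure ℝ) (τ : ℝ) : Set ℝ :=
  {t | (μ (Set.Iio t)).toReal ≤ τ ∧ τ ≤ (μ (Set.Iic t)).toReal}

/-!
For `q ≤ a` the excess loss splits pointwise as
`L(y;a) - L(y;q) = (g a - g q)(𝟙{y ≤ q} - τ) + (g a - g y) 𝟙{q < y ≤ a}`,
whose expectation is `(g a - g q)(F(q) - τ) + E[(g a - g Y) 𝟙{q < Y ≤ a}]`, a sum of two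
nonnegative terms because `g` is increasing and `F(q) ≥ τ`. Equality kills both terms; since `g` is
strictly increasing this forces `F(q) = τ` and `μ (q, a) = 0`, which puts `a` in the quantile set.
The case `a < q` is the mirror image, with `F(q⁻) ≤ τ` and the interval `(a, q)`.
Monotonicity of `g` is only available on `I`, so one first needs `q ∈ I`: as `0 < τ < 1`, both
`(-∞, q]` and `[q, ∞)` carry mass, hence meet `I`.
-/

open Set

lemma measure_eq_zero_of_setIntegral_eq_zero {X : Type*} [MeasurableSpace X] {μ : Measure X}
    {f : X → ℝ} {s t : Set X} (hs : MeasurableSet s) (hf : IntegrableOn f s μ)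
    (hnn : ∀ x ∈ s, 0 ≤ f x) (hts : t ⊆ s) (hpos : ∀ x ∈ t, 0 < f x)
    (h : ∫ x in s, f x ∂μ = 0) : μ t = 0 := by
  have hnn' : 0 ≤ᵐ[μ.restrict s] f := (ae_restrict_iff' hs).2 (.of_forall hnn)
  have hnull : μ (Function.support f ∩ s) = 0 := by
    simpa [h] using (setIntegral_pos_iff_support_of_nonneg_ae hnn' hf).not
  refine measure_mono_null (fun x hx => ?_) hnull
  exact ⟨Function.mem_support.2 (hpos x hx).ne', hts hx⟩

section Quantile

variable {μ : Measure ℝ} {τ q : ℝ}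

lemma mem_quantileSet_iff {t : ℝ} :
    t ∈ quantileSet μ τ ↔ μ.real (Iio t) ≤ τ ∧ τ ≤ μ.real (Iic t) := Iff.rfl

lemma measure_Iio_eq_measure_Iic_of_measure_Ioo_eq_zero {s t : ℝ} (hst : s < t)
    (h : μ (Ioo s t) = 0) : μ (Iio t) = μ (Iic s) := by
  rw [← Iic_union_Ioo_eq_Iio hst]
  exact measure_congr (union_ae_eq_left_of_ae_eq_empty (ae_eq_empty.2 h))

lemma mem_of_mem_quantileSet [IsProbabilityMeasure μ] {I : Set ℝ} (hI : I.OrdConnected)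
    (hsupp : ∀ᵐ y ∂μ, y ∈ I) (hτ : τ ∈ Ioo 0 1) (hq : q ∈ quantileSet μ τ) : q ∈ I := by
  obtain ⟨x, hxI, hxq⟩ : ∃ x ∈ I, x ≤ q := by
    by_contra! h
    have : μ (Iic q) = 0 :=
      measure_eq_zero_iff_ae_notMem.2 (hsupp.mono fun y hy hyq => (h y hy).not_ge hyq)
    have h2 := hq.2
    rw [this] at h2
    linarith [hτ.1, ENNReal.toReal_zero]
  obtain ⟨z, hzI, hqz⟩ : ∃ z ∈ I, q ≤ z := by
    by_contra! h
    have : μ (Iio q) = 1 := by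
      rw [← measure_univ (μ := μ),
        ← ae_mem_iff_measure_eq measurableSet_Iio.nullMeasurableSet]
      exact hsupp.mono fun y hy => h y hy
    have h1 := hq.1
    rw [this] at h1
    linarith [hτ.2, ENNReal.toReal_one]
  exact hI.out hxI hzI ⟨hxq, hqz⟩

end Quantile

section Loss

variable {g : ℝ → ℝ} {τ q a : ℝ}

lemma gplLoss_eq_sub_indicator (y : ℝ) :
    gplLoss g τ y a = τ * (g y - g a) - (Iic a).indicator (fun z => g z - g a) y := by
  simp only [gplLoss, indicator_apply, mem_Iic]
  split_ifs <;> ring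

lemma gplLoss_sub_of_le (hqa : q ≤ a) (y : ℝ) :
    gplLoss g τ y a - gplLoss g τ y q =
      (g a - g q) * ((Iic q).indicator 1 y - τ) + (Ioc q a).indicator (fun z => g a - g z) y := by
  simp only [gplLoss, indicator_apply, mem_Iic, mem_Ioc, Pi.one_apply]
  split_ifs <;> grind

lemma gplLoss_sub_of_ge (haq : a ≤ q) (y : ℝ) :
    gplLoss g τ y a - gplLoss g τ y q =
      (g q - g a) * (τ - (Iio q).indicator 1 y) + (Ioo a q).indicator (fun z => g z - g a) y := by
  simp only [gplLoss, indicator_apply, mem_Iio, mem_Ioo, Pi.one_apply]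
  split_ifs <;> grind

variable {μ : Measure ℝ}

lemma integrable_gplLoss [IsFiniteMeasure μ] (hg : Integrable g μ) :
    Integrable (fun y => gplLoss g τ y a) μ := by
  simp_rw [gplLoss_eq_sub_indicator]
  have hsub : Integrable (fun z => g z - g a) μ := hg.sub (integrable_const _)
  exact (hsub.const_mul τ).sub (hsub.indicator measurableSet_Iic)

variable [IsProbabilityMeasure μ]

lemma integral_gplLoss_sub_of_le (hg : Integrable g μ) (hqa : q ≤ a) :
    ∫ y, gplLoss g τ y a ∂μ - ∫ y, gplLoss g τ y q ∂μ =
      (g a - g q) * (μ.real (Iic q) - τ) + ∫ y in Ioc q a, (g a - g y) ∂μ := by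
  have hind : Integrable ((Iic q).indicator (1 : ℝ → ℝ)) μ :=
    (integrable_const 1).indicator measurableSet_Iic
  rw [← integral_sub (integrable_gplLoss hg) (integrable_gplLoss hg)]
  simp_rw [gplLoss_sub_of_le hqa]
  have h1 : Integrable (fun y => (g a - g q) * ((Iic q).indicator 1 y - τ)) μ :=
    (hind.sub (integrable_const τ)).const_mul _
  have h2 : Integrable ((Ioc q a).indicator fun z => g a - g z) μ :=
    ((integrable_const _).sub hg).indicator measurableSet_Ioc
  rw [integral_add h1 h2, integral_const_mul, integral_sub hind (integrable_const τ),
    integral_indicator_one measurableSet_Iic, integral_indicator measurableSet_Ioc]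
  simp

lemma integral_gplLoss_sub_of_ge (hg : Integrable g μ) (haq : a ≤ q) :
    ∫ y, gplLoss g τ y a ∂μ - ∫ y, gplLoss g τ y q ∂μ =
      (g q - g a) * (τ - μ.real (Iio q)) + ∫ y in Ioo a q, (g y - g a) ∂μ := by
  have hind : Integrable ((Iio q).indicator (1 : ℝ → ℝ)) μ :=
    (integrable_const 1).indicator measurableSet_Iio
  rw [← integral_sub (integrable_gplLoss hg) (integrable_gplLoss hg)]
  simp_rw [gplLoss_sub_of_ge haq]
  have h1 : Integrable (fun y => (g q - g a) * (τ - (Iio q).indicator 1 y)) μ :=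
    ((integrable_const τ).sub hind).const_mul _
  have h2 : Integrable ((Ioo a q).indicator fun z => g z - g a) μ :=
    (hg.sub (integrable_const _)).indicator measurableSet_Ioo
  rw [integral_add h1 h2, integral_const_mul, integral_sub (integrable_const τ) hind,
    integral_indicator_one measurableSet_Iio, integral_indicator measurableSet_Ioo]
  simp

lemma gpl_strictly_consistent_of_quantile_lt (hgint : Integrable g μ)
    (hg : StrictMonoOn g (Icc q a)) (hqa : q < a) (hq : q ∈ quantileSet μ τ) :
    (∫ y, gplLoss g τ y q ∂μ ≤ ∫ y, gplLoss g τ y a ∂μ) ∧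
    (∫ y, gplLoss g τ y q ∂μ = ∫ y, gplLoss g τ y a ∂μ → a ∈ quantileSet μ τ) := by
  have ha : a ∈ Icc q a := right_mem_Icc.2 hqa.le
  have hdiff := integral_gplLoss_sub_of_le (τ := τ) hgint hqa.le
  have hgqa : g q < g a := hg (left_mem_Icc.2 hqa.le) ha hqa
  have hnn : ∀ y ∈ Ioc q a, 0 ≤ g a - g y := fun y hy =>
    sub_nonneg.2 (hg.monotoneOn (Ioc_subset_Icc_self hy) ha hy.2)
  have hA : 0 ≤ (g a - g q) * (μ.real (Iic q) - τ) :=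
    mul_nonneg (by linarith) (by linarith [(mem_quantileSet_iff.1 hq).2])
  have hB := setIntegral_nonneg (μ := μ) measurableSet_Ioc hnn
  refine ⟨by linarith, fun heq => ?_⟩
  have hF : μ.real (Iic q) = τ := by
    have hA0 : (g a - g q) * (μ.real (Iic q) - τ) = 0 := by linarith
    linarith [(mul_eq_zero.1 hA0).resolve_left (by linarith)]
  have hnull : μ (Ioo q a) = 0 :=
    measure_eq_zero_of_setIntegral_eq_zero (f := fun y => g a - g y) measurableSet_Ioc
      ((integrable_const _).sub hgint).integrableOn hnn Ioo_subset_Ioc_self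
      (fun y hy => sub_pos.2 (hg (Ioo_subset_Icc_self hy) ha hy.2)) (by linarith)
  have hIio : μ.real (Iio a) = μ.real (Iic q) :=
    congrArg ENNReal.toReal (measure_Iio_eq_measure_Iic_of_measure_Ioo_eq_zero hqa hnull)
  exact ⟨(hIio.trans hF).le, hF ▸ measureReal_mono (Iic_subset_Iic.2 hqa.le)⟩

lemma gpl_strictly_consistent_of_lt_quantile (hgint : Integrable g μ)
    (hg : StrictMonoOn g (Icc a q)) (haq : a < q) (hq : q ∈ quantileSet μ τ) :
    (∫ y, gplLoss g τ y q ∂μ ≤ ∫ y, gplLoss g τ y a ∂μ) ∧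
    (∫ y, gplLoss g τ y q ∂μ = ∫ y, gplLoss g τ y a ∂μ → a ∈ quantileSet μ τ) := by
  have ha : a ∈ Icc a q := left_mem_Icc.2 haq.le
  have hdiff := integral_gplLoss_sub_of_ge (τ := τ) hgint haq.le
  have hgaq : g a < g q := hg ha (right_mem_Icc.2 haq.le) haq
  have hpos : ∀ y ∈ Ioo a q, 0 < g y - g a := fun y hy =>
    sub_pos.2 (hg ha (Ioo_subset_Icc_self hy) hy.1)
  have hA : 0 ≤ (g q - g a) * (τ - μ.real (Iio q)) :=
    mul_nonneg (by linarith) (by linarith [(mem_quantileSet_iff.1 hq).1])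
  have hB := setIntegral_nonneg (μ := μ) measurableSet_Ioo fun y hy => (hpos y hy).le
  refine ⟨by linarith, fun heq => ?_⟩
  have hF : μ.real (Iio q) = τ := by
    have hA0 : (g q - g a) * (τ - μ.real (Iio q)) = 0 := by linarith
    linarith [(mul_eq_zero.1 hA0).resolve_left (by linarith)]
  have hnull : μ (Ioo a q) = 0 :=
    measure_eq_zero_of_setIntegral_eq_zero (f := fun y => g y - g a) measurableSet_Ioo
      (hgint.sub (integrable_const _)).integrableOn (fun y hy => (hpos y hy).le) subset_rfl
      hpos (by linarith)
  have hIio : μ.real (Iio q) = μ.real (Iic a) :=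
    congrArg ENNReal.toReal (measure_Iio_eq_measure_Iic_of_measure_Ioo_eq_zero haq hnull)
  exact ⟨hF ▸ measureReal_mono (Iio_subset_Iio haq.le), (hF.symm.trans hIio).le⟩

end Loss

theorem gpl_strictly_consistent_for_quantile
    (μ : Measure ℝ) [IsProbabilityMeasure μ]
    (I : Set ℝ) (hI : Convex ℝ I) (hsupp : ∀ᵐ y ∂μ, y ∈ I)
    (g : ℝ → ℝ) (hg : StrictMonoOn g I)
    (hgint : Integrable (fun y => g y) μ)
    (τ : ℝ) (hτ : τ ∈ Set.Ioo (0:ℝ) 1)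
    (q : ℝ) (hq : q ∈ quantileSet μ τ) (a : ℝ) (ha : a ∈ I) :
    (∫ y, gplLoss g τ y q ∂μ ≤ ∫ y, gplLoss g τ y a ∂μ) ∧
    (∫ y, gplLoss g τ y q ∂μ = ∫ y, gplLoss g τ y a ∂μ → a ∈ quantileSet μ τ) := by
  have hqI : q ∈ I := mem_of_mem_quantileSet hI.ordConnected hsupp hτ hq
  rcases lt_trichotomy q a with hqa | rfl | haq
  · exact gpl_strictly_consistent_of_quantile_lt hgint
      (hg.mono (hI.ordConnected.out hqI ha)) hqa hq
  · exact ⟨le_rfl, fun _ => hq⟩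
  · exact gpl_strictly_consistent_of_lt_quantile hgint
      (hg.mono (hI.ordConnected.out ha hqI)) haq hq
end

section
/- Fix v ∈ ℝ, τ ∈ (0,1), and a strictly convex differentiable function Φ: ℝ² → ℝ. For a random variable Y with finite first moment, the map (e⁻, e⁺) ↦ E[⟨∇Φ(e⁻,e⁺), (e⁻ + (1/τ)S⁻_τ(Y;v), e⁺ − (1/(1−τ))S⁺_τ(Y;v))⟩ − Φ(e⁻,e⁺)] is uniquely minimized at (e⁻,e⁺) = (−(1/τ)E[S⁻_τ(Y;v)], (1/(1−τ))E[S⁺_τ(Y;v)]). -/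
open MeasureTheory

/-
The objective is the expectation of an affine function of the two scores, so at
`e = (e⁻, e⁺)` it equals `⟨∇Φ(e), e - g⟩ - Φ(e)`, where `g` is the claimed minimizer; at `e = g` it is `-Φ(g)`.
The claim is therefore the strict first-order inequality `Φ(e) + ⟨∇Φ(e), g - e⟩ < Φ(g)`
for a strictly convex function, obtained by restricting `Φ` to the segment from `e` to `g`.
-/

theorem StrictConvexOn.comp_affineMap {𝕜 E F β : Type*} [Field 𝕜] [LinearOrder 𝕜]
    [AddCommGroup E] [AddCommGroup F] [Module 𝕜 E] [Module 𝕜 F]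
    [AddCommMonoid β] [PartialOrder β] [SMul 𝕜 β]
    {f : F → β} {g : E →ᵃ[𝕜] F} (hg : Function.Injective g) {s : Set F}
    (hf : StrictConvexOn 𝕜 s f) : StrictConvexOn 𝕜 (g ⁻¹' s) (f ∘ g) :=
  ⟨hf.1.affine_preimage _, fun x hx y hy hxy a b ha hb hab =>
    calc
      (f ∘ g) (a • x + b • y) = f (a • g x + b • g y) := by
        rw [Function.comp_apply, Convex.combo_affine_apply hab]
      _ < a • f (g x) + b • f (g y) := hf.2 hx hy (hg.ne hxy) ha hb hab⟩

theorem StrictConvexOn.add_lt_of_hasFDerivAt {E : Type*} [NormedAddCommGroup E]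
    [NormedSpace ℝ E] {s : Set E} {f : E → ℝ} {f' : E →L[ℝ] ℝ} {x y : E}
    (hf : StrictConvexOn ℝ s f) (hx : x ∈ s) (hy : y ∈ s) (hxy : x ≠ y)
    (hf' : HasFDerivAt f f' x) : f x + f' (y - x) < f y := by
  let L : ℝ →ᵃ[ℝ] E := AffineMap.lineMap x y
  have hL : StrictConvexOn ℝ (L ⁻¹' s) (f ∘ L) :=
    hf.comp_affineMap (AffineMap.lineMap_injective ℝ hxy)
  have hderiv : HasDerivAt (f ∘ L) (f' (y - x)) 0 := by
    have hf'L : HasFDerivAt f f' (L 0) := by simpa [L] using hf'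
    exact hf'L.comp_hasDerivAt 0 AffineMap.hasDerivAt_lineMap
  have := hL.lt_slope_of_hasDerivAt (by simpa [L] using hx) (by simpa [L] using hy) one_pos
    hderiv
  simp only [slope_def_field, Function.comp_apply, L, AffineMap.lineMap_apply_zero,
    AffineMap.lineMap_apply_one, sub_zero, div_one] at this
  linarith

theorem MeasureTheory.Integrable.comp_of_abs_le_abs_add_const {Ω : Type*} [MeasurableSpace Ω]
    {P : Measure Ω} [IsFiniteMeasure P] {Y : Ω → ℝ} (hY : Integrable Y P) {h : ℝ → ℝ}
    (hh : Measurable h) (C : ℝ) (hbound : ∀ y, |h y| ≤ |y| + C) :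
    Integrable (fun ω => h (Y ω)) P :=
  (hY.abs.add (integrable_const C)).mono'
    (hh.comp_aemeasurable hY.aemeasurable).aestronglyMeasurable
    (Filter.Eventually.of_forall fun ω => by simpa using hbound (Y ω))

theorem measurable_Sminus (τ a : ℝ) : Measurable fun y => Sminus τ y a := by
  have h : Measurable fun y : ℝ => if y ≤ a then (1 : ℝ) else 0 :=
    Measurable.ite measurableSet_Iic measurable_const measurable_const
  unfold Sminus; fun_prop

theorem measurable_Splus (τ a : ℝ) : Measurable fun y => Splus τ y a := by
  have h : Measurable fun y : ℝ => if a < y then (1 : ℝ) else 0 :=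
    Measurable.ite measurableSet_Ioi measurable_const measurable_const
  unfold Splus; fun_prop

theorem abs_Sminus_le (τ y a : ℝ) : |Sminus τ y a| ≤ |y| + (1 + |τ|) * |a| := by
  have hτa : |τ * a| = |τ| * |a| := abs_mul τ a
  unfold Sminus
  split_ifs <;> rw [abs_le] <;> constructor <;>
    linarith [le_abs_self y, neg_abs_le y, le_abs_self a, neg_abs_le a,
      le_abs_self (τ * a), neg_abs_le (τ * a)]

theorem abs_Splus_le (τ y a : ℝ) : |Splus τ y a| ≤ |y| + (1 + |τ|) * |a| := by
  have hτa : |τ * a| = |τ| * |a| := abs_mul τ a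
  unfold Splus
  split_ifs <;> rw [abs_le] <;> constructor <;>
    linarith [le_abs_self y, neg_abs_le y, le_abs_self a, neg_abs_le a,
      le_abs_self (τ * a), neg_abs_le (τ * a)]

theorem integral_mul_add_mul_sub_const {Ω : Type*} [MeasurableSpace Ω] {P : Measure Ω}
    [IsProbabilityMeasure P] {X Z : Ω → ℝ} (hX : Integrable X P) (hZ : Integrable Z P)
    (c₁ c₂ c e₁ e₂ k l : ℝ) :
    ∫ ω, (c₁ * (e₁ + k * X ω) + c₂ * (e₂ - l * Z ω) - c) ∂P
      = c₁ * (e₁ + k * ∫ ω, X ω ∂P) + c₂ * (e₂ - l * ∫ ω, Z ω ∂P) - c := by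
  simp only [mul_add, mul_sub, ← mul_assoc]
  rw [integral_sub, integral_add, integral_add, integral_sub, integral_const_mul,
    integral_const_mul]
  all_goals first | simp [integral_const_mul] | fun_prop

theorem bregman2D_unique_min_general
    {Ω : Type*} [MeasurableSpace Ω] (P : Measure Ω) [IsProbabilityMeasure P]
    (Y : Ω → ℝ) (hYint : Integrable Y P)
    (τ v : ℝ)
    (Φ Φ₁ Φ₂ : ℝ → ℝ → ℝ)
    (hgrad : ∀ a b : ℝ, HasFDerivAt (fun p : ℝ × ℝ => Φ p.1 p.2)
      ((Φ₁ a b) • (ContinuousLinearMap.fst ℝ ℝ ℝ) +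
        (Φ₂ a b) • (ContinuousLinearMap.snd ℝ ℝ ℝ)) (a, b))
    (hstrict : StrictConvexOn ℝ Set.univ (fun p : ℝ × ℝ => Φ p.1 p.2)) :
    ∀ em ep : ℝ,
      (em, ep) ≠ (-(1/τ) * ∫ ω, Sminus τ (Y ω) v ∂P,
                  (1/(1-τ)) * ∫ ω, Splus τ (Y ω) v ∂P) →
      (∫ ω, (Φ₁ (-(1/τ) * ∫ ω', Sminus τ (Y ω') v ∂P) ((1/(1-τ)) * ∫ ω', Splus τ (Y ω') v ∂P)
              * ((-(1/τ) * ∫ ω', Sminus τ (Y ω') v ∂P) + (1/τ) * Sminus τ (Y ω) v)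
            + Φ₂ (-(1/τ) * ∫ ω', Sminus τ (Y ω') v ∂P) ((1/(1-τ)) * ∫ ω', Splus τ (Y ω') v ∂P)
              * (((1/(1-τ)) * ∫ ω', Splus τ (Y ω') v ∂P) - (1/(1-τ)) * Splus τ (Y ω) v)
            - Φ (-(1/τ) * ∫ ω', Sminus τ (Y ω') v ∂P) ((1/(1-τ)) * ∫ ω', Splus τ (Y ω') v ∂P)) ∂P)
      < ∫ ω, (Φ₁ em ep * (em + (1/τ) * Sminus τ (Y ω) v)
            + Φ₂ em ep * (ep - (1/(1-τ)) * Splus τ (Y ω) v)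
            - Φ em ep) ∂P := by
  intro em ep hne
  have hSm : Integrable (fun ω => Sminus τ (Y ω) v) P :=
    hYint.comp_of_abs_le_abs_add_const (measurable_Sminus τ v) _ (abs_Sminus_le τ · v)
  have hSp : Integrable (fun ω => Splus τ (Y ω) v) P :=
    hYint.comp_of_abs_le_abs_add_const (measurable_Splus τ v) _ (abs_Splus_le τ · v)
  rw [integral_mul_add_mul_sub_const hSm hSp, integral_mul_add_mul_sub_const hSm hSp]
  have htan := hstrict.add_lt_of_hasFDerivAt (Set.mem_univ _) (Set.mem_univ _) hne (hgrad em ep)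
  simp only [FunLike.coe_add, Pi.add_apply, FunLike.coe_smul, Pi.smul_apply,
    ContinuousLinearMap.coe_fst', ContinuousLinearMap.coe_snd', Prod.fst_sub, Prod.snd_sub,
    smul_eq_mul] at htan
  linear_combination htan

/-- For fixed `v`, the Bregman-type map in `(e⁻, e⁺)` built from a strictly convex
differentiable `Φ` (with partial derivatives `Φ₁, Φ₂`) is uniquely minimized at
`(-(1/τ)E[S⁻_τ(Y;v)], (1/(1-τ))E[S⁺_τ(Y;v)])`. -/
theorem bregman2D_unique_min
    {Ω : Type*} [MeasurableSpace Ω] (P : Measure Ω) [IsProbabilityMeasure P]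
    (Y : Ω → ℝ) (hYmeas : Measurable Y) (hYint : Integrable Y P)
    (τ v : ℝ) (hτ : τ ∈ Set.Ioo (0:ℝ) 1)
    (Φ Φ₁ Φ₂ : ℝ → ℝ → ℝ)
    (hgrad : ∀ a b : ℝ, HasFDerivAt (fun p : ℝ × ℝ => Φ p.1 p.2)
      ((Φ₁ a b) • (ContinuousLinearMap.fst ℝ ℝ ℝ) +
        (Φ₂ a b) • (ContinuousLinearMap.snd ℝ ℝ ℝ)) (a, b))
    (hstrict : StrictConvexOn ℝ Set.univ (fun p : ℝ × ℝ => Φ p.1 p.2)) :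
    ∀ em ep : ℝ,
      (em, ep) ≠ (-(1/τ) * ∫ ω, Sminus τ (Y ω) v ∂P,
                  (1/(1-τ)) * ∫ ω, Splus τ (Y ω) v ∂P) →
      (∫ ω, (Φ₁ (-(1/τ) * ∫ ω', Sminus τ (Y ω') v ∂P) ((1/(1-τ)) * ∫ ω', Splus τ (Y ω') v ∂P)
              * ((-(1/τ) * ∫ ω', Sminus τ (Y ω') v ∂P) + (1/τ) * Sminus τ (Y ω) v)
            + Φ₂ (-(1/τ) * ∫ ω', Sminus τ (Y ω') v ∂P) ((1/(1-τ)) * ∫ ω', Splus τ (Y ω') v ∂P)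
              * (((1/(1-τ)) * ∫ ω', Splus τ (Y ω') v ∂P) - (1/(1-τ)) * Splus τ (Y ω) v)
            - Φ (-(1/τ) * ∫ ω', Sminus τ (Y ω') v ∂P) ((1/(1-τ)) * ∫ ω', Splus τ (Y ω') v ∂P)) ∂P)
      < ∫ ω, (Φ₁ em ep * (em + (1/τ) * Sminus τ (Y ω) v)
            + Φ₂ em ep * (ep - (1/(1-τ)) * Splus τ (Y ω) v)
            - Φ em ep) ∂P :=
  bregman2D_unique_min_general P Y hYint τ v Φ Φ₁ Φ₂ hgrad hstrict
end
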